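/- arXiv:1209.5075 — 2 statements merged into one kernel-verified Lean document; each statement's English description precedes it below -/
import Mathlib

section
/- Let m, f ≥ 1, let A, A' be m×m positive definite real matrices and B, B' be f×f positive definite real matrices. If the Kronecker products satisfy A ⊗ B = A' ⊗ B', then there exists η > 0 such that A' = ηA and B' = (1/η)B; consequently the correlation matrices agree: ρ(A') = ρ(A) and ρ(B') = ρ(B). -/
/-! Comparing the entries `a_{ij} b_{kl} = a'_{ij} b'_{kl}` of `A ⊗ B = A' ⊗ B'` with a fixed
nonzero entry of `B` shows that `A'` is a multiple `η A`, and with a fixed nonzero entry of `A`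
that `B` is the same multiple `η B'`. The diagonal of a positive definite matrix is positive, so
`a'_{ii} = η a_{ii}` forces `η > 0`, and a positive factor cancels in `a_{ij}/√(a_{ii}a_{jj})`. -/

open Matrix
open scoped Kronecker

noncomputable section

/-- The correlation matrix `ρ(A) = (a_{ij}/√(a_{ii}a_{jj}))`. -/
def corr {n : Type*} [Fintype n] (A : Matrix n n ℝ) : Matrix n n ℝ :=
  Matrix.of fun i j => A i j / Real.sqrt (A i i * A j j)

theorem corr_smul {n : Type*} [Fintype n] (A : Matrix n n ℝ) {c : ℝ} (hc : 0 < c) :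
    corr (c • A) = corr A := by
  ext i j
  simp only [corr, of_apply, Matrix.smul_apply, smul_eq_mul]
  rw [mul_mul_mul_comm, Real.sqrt_mul (mul_self_nonneg c), Real.sqrt_mul_self hc.le,
    mul_div_mul_left _ _ hc.ne']

theorem Matrix.PosDef.ne_zero {n : Type*} [Fintype n] [Nonempty n] {A : Matrix n n ℝ}
    (hA : A.PosDef) : A ≠ 0 := by
  intro h0
  simpa [h0] using hA.diag_pos (i := Classical.arbitrary n)

theorem Matrix.exists_smul_of_kronecker_eq_kronecker {K l m n p : Type*} [Field K]
    {A A' : Matrix l m K} {B B' : Matrix n p K} (hA : A ≠ 0) (hB : B ≠ 0)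
    (h : A ⊗ₖ B = A' ⊗ₖ B') : ∃ c : K, c ≠ 0 ∧ A' = c • A ∧ B = c • B' := by
  have entry (i j k l) : A i j * B k l = A' i j * B' k l := by
    simpa using congrFun (congrFun h (i, k)) (j, l)
  obtain ⟨i, j, hij⟩ : ∃ i j, A i j ≠ 0 := by
    by_contra! h0
    exact hA (Matrix.ext h0)
  obtain ⟨k, l, hkl⟩ : ∃ k l, B k l ≠ 0 := by
    by_contra! h0
    exact hB (Matrix.ext h0)
  have hkl' : B' k l ≠ 0 := by
    intro h0
    simpa [h0, hij, hkl] using entry i j k l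
  refine ⟨B k l / B' k l, div_ne_zero hkl hkl', ?_, ?_⟩
  · ext a b
    rw [Matrix.smul_apply, smul_eq_mul, div_mul_eq_mul_div, eq_div_iff hkl']
    linear_combination (entry a b k l).symm
  · ext r s
    rw [Matrix.smul_apply, smul_eq_mul, div_mul_eq_mul_div, eq_div_iff hkl']
    apply mul_left_cancel₀ hij
    linear_combination B' k l * entry i j r s - B' r s * entry i j k l

theorem kronecker_identifiability_general {m f : ℕ} (hm : 1 ≤ m) (hf : 1 ≤ f)
    (A A' : Matrix (Fin m) (Fin m) ℝ) (B B' : Matrix (Fin f) (Fin f) ℝ)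
    (hA : A.PosDef) (hA' : A'.PosDef) (hB : B.PosDef)
    (h : A ⊗ₖ B = A' ⊗ₖ B') :
    ∃ η : ℝ, 0 < η ∧ A' = η • A ∧ B' = (1 / η) • B ∧
      corr A' = corr A ∧ corr B' = corr B := by
  have : Nonempty (Fin m) := ⟨⟨0, hm⟩⟩
  have : Nonempty (Fin f) := ⟨⟨0, hf⟩⟩
  obtain ⟨η, -, hA'η, hBη⟩ :=
    exists_smul_of_kronecker_eq_kronecker hA.ne_zero hB.ne_zero h
  have hη : 0 < η := by
    have hdiag := hA'.diag_pos (i := ⟨0, hm⟩)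
    rw [hA'η, Matrix.smul_apply, smul_eq_mul] at hdiag
    exact (pos_iff_pos_of_mul_pos hdiag).mpr hA.diag_pos
  have hB'η : B' = (1 / η) • B := by
    rw [one_div, eq_inv_smul_iff₀ hη.ne', hBη]
  refine ⟨η, hη, hA'η, hB'η, ?_, ?_⟩
  · rw [hA'η, corr_smul A hη]
  · rw [hB'η, corr_smul B (one_div_pos.mpr hη)]

/-- Identifiability: if `A ⊗ B = A' ⊗ B'` for positive definite matrices, then
`A' = ηA` and `B' = (1/η)B` for some `η > 0`; in particular the correlation
matrices agree. -/
theorem kronecker_identifiability {m f : ℕ} (hm : 1 ≤ m) (hf : 1 ≤ f)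
    (A A' : Matrix (Fin m) (Fin m) ℝ) (B B' : Matrix (Fin f) (Fin f) ℝ)
    (hA : A.PosDef) (hA' : A'.PosDef) (hB : B.PosDef) (hB' : B'.PosDef)
    (h : A ⊗ₖ B = A' ⊗ₖ B') :
    ∃ η : ℝ, 0 < η ∧ A' = η • A ∧ B' = (1 / η) • B ∧
      corr A' = corr A ∧ corr B' = corr B :=
  kronecker_identifiability_general hm hf A A' B B' hA hA' hB h

end
end

section
/- Let Γ̂ be an m×m symmetric positive semidefinite real matrix with Γ̂_{ii} = 1 for all i, and let λ > 0. Then the function Θ ↦ tr(Γ̂Θ) − log det(Θ) + λ|Θ|_{1,off} attains its minimum over the set of m×m positive definite matrices, and the minimizer Θ̂ is unique; moreover Â_ρ := Θ̂⁻¹ is the unique minimizer over positive definite matrices A_ρ of A_ρ ↦ tr(Γ̂A_ρ⁻¹) + log det(A_ρ) + λ|A_ρ⁻¹|_{1,off}. -/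
open Matrix

noncomputable section

/-- Off-diagonal vectorized ℓ₁ norm `|M|_{1,off}`. -/
def offDiagL1 {n : Type*} [Fintype n] [DecidableEq n] (M : Matrix n n ℝ) : ℝ :=
  ∑ i, ∑ j, if i = j then 0 else |M i j|

/-- The graphical Lasso objective in the precision matrix `Θ`:
`tr(Γ̂Θ) − log det Θ + λ|Θ|_{1,off}`. -/
def glassoObj {n : Type*} [Fintype n] [DecidableEq n]
    (Γ : Matrix n n ℝ) (lam : ℝ) (Θ : Matrix n n ℝ) : ℝ :=
  (Γ * Θ).trace - Real.log Θ.det + lam * offDiagL1 Θ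

/-- The corresponding objective in the covariance parameter `A_ρ`:
`tr(Γ̂A_ρ⁻¹) + log det A_ρ + λ|A_ρ⁻¹|_{1,off}`. -/
def glassoObjCov {n : Type*} [Fintype n] [DecidableEq n]
    (Γ : Matrix n n ℝ) (lam : ℝ) (Arho : Matrix n n ℝ) : ℝ :=
  (Γ * Arho⁻¹).trace + Real.log Arho.det + lam * offDiagL1 Arho⁻¹

/-!
Since `Γ̂` is positive semidefinite with unit diagonal, `|Γ̂ᵢⱼ| ≤ 1`, so
`tr(Γ̂Θ) ≥ max(0, tr Θ − |Θ|_{1,off})` and hence `tr(Γ̂Θ) + λ|Θ|_{1,off} ≥ min(λ, 1) tr Θ`.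
Bounding `log det Θ` eigenvalue by eigenvalue through `log x ≤ t x − 1 − log t` then puts the
sublevel set `{f ≤ f 1}` of the objective `f` inside a compact set of positive semidefinite
matrices with bounded trace and determinant bounded away from `0`, where `f` is continuous; so
`f` attains its minimum on the positive definite cone.

Uniqueness comes from strict midpoint concavity of `log det`: writing `A = CᴴC` and `B = CᴴMC`,
it reduces to `det M < det((1 + M)/2)²` for `M ≠ 1`, which is AM–GM on the eigenvalues of `M`.
Finally `Θ ↦ Θ⁻¹` is an involution of the positive definite cone carrying the covariance-form
objective to `f`.
-/

open Finset

namespace Matrix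

variable {n : Type*} [Fintype n] [DecidableEq n]

lemma PosSemidef.abs_apply_le {M : Matrix n n ℝ} (hM : M.PosSemidef) (i j : n) :
    |M i j| ≤ (M i i + M j j) / 2 := by
  rcases eq_or_ne i j with rfl | hij
  · rw [abs_of_nonneg hM.diag_nonneg]; linarith
  have hsymm : M j i = M i j := by simpa using congrFun (congrFun hM.1 i) j
  have quad (s : ℝ) : 0 ≤ M i i + 2 * s * M i j + s ^ 2 * M j j := by
    have := hM.dotProduct_mulVec_nonneg (Pi.single i 1 + s • Pi.single j 1)
    simp only [star_trivial, mulVec_add, mulVec_single, MulOpposite.op_one, one_smul, mulVec_smul,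
      dotProduct_add, add_dotProduct, single_dotProduct, col_apply, one_mul, smul_dotProduct, hsymm,
      smul_eq_mul, dotProduct_smul] at this
    linarith
  rw [abs_le]; constructor <;> nlinarith [quad 1, quad (-1)]

lemma PosSemidef.abs_apply_le_trace {M : Matrix n n ℝ} (hM : M.PosSemidef) (i j : n) :
    |M i j| ≤ M.trace := by
  have hdiag (k : n) : M k k ≤ M.trace :=
    single_le_sum (f := fun k => M k k) (fun _ _ => hM.diag_nonneg) (mem_univ k)
  linarith [hM.abs_apply_le i j, hdiag i, hdiag j]

open scoped MatrixOrder in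
lemma PosSemidef.trace_mul_nonneg {A B : Matrix n n ℝ} (hA : A.PosSemidef) (hB : B.PosSemidef) :
    0 ≤ (A * B).trace := by
  obtain ⟨C, rfl⟩ := CStarAlgebra.nonneg_iff_eq_star_mul_self.mp hA.nonneg
  rw [star_eq_conjTranspose, ← trace_mul_cycle]
  exact (hB.mul_mul_conjTranspose_same C).trace_nonneg

omit [DecidableEq n] in
lemma isClosed_setOf_posSemidef : IsClosed {M : Matrix n n ℝ | M.PosSemidef} := by
  simp only [posSemidef_iff_dotProduct_mulVec, Set.ofPred_and, Set.ofPred_forall]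
  exact (isClosed_eq continuous_id.matrix_conjTranspose continuous_id).inter
    (isClosed_iInter fun x => isClosed_le continuous_const
      (continuous_const.dotProduct (continuous_id.matrix_mulVec continuous_const)))

lemma isCompact_setOf_posSemidef_trace_le_det_ge (T ε : ℝ) :
    IsCompact {M : Matrix n n ℝ | M.PosSemidef ∧ M.trace ≤ T ∧ ε ≤ M.det} := by
  have hclosed : IsClosed {M : Matrix n n ℝ | M.PosSemidef ∧ M.trace ≤ T ∧ ε ≤ M.det} :=
    isClosed_setOf_posSemidef.inter
      ((isClosed_le continuous_id.matrix_trace continuous_const).inter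
        (isClosed_le continuous_const continuous_id.matrix_det))
  have hbox := isCompact_univ_pi fun _ : n => isCompact_univ_pi fun _ : n =>
    isCompact_Icc (a := -T) (b := T)
  refine hbox.of_isClosed_subset hclosed fun M ⟨hM, htr, _⟩ => ?_
  simp only [Set.mem_pi, Set.mem_univ, forall_const, Set.mem_Icc, ← abs_le]
  exact fun i j => (hM.abs_apply_le_trace i j).trans htr

lemma PosDef.log_det_le {M : Matrix n n ℝ} (hM : M.PosDef) {t : ℝ} (ht : 0 < t) :
    Real.log M.det ≤ t * M.trace - Fintype.card n * (1 + Real.log t) := by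
  have hdet : M.det = ∏ i, hM.1.eigenvalues i := by simpa using hM.1.det_eq_prod_eigenvalues
  have htr : M.trace = ∑ i, hM.1.eigenvalues i := by simpa using hM.1.trace_eq_sum_eigenvalues
  rw [hdet, htr, Real.log_prod fun i _ => (hM.eigenvalues_pos i).ne', mul_sum, ← card_univ,
    ← nsmul_eq_mul, ← sum_const, ← sum_sub_distrib]
  refine sum_le_sum fun i _ => ?_
  have hi := hM.eigenvalues_pos i
  have := Real.log_le_sub_one_of_pos (mul_pos ht hi)
  rw [Real.log_mul ht.ne' hi.ne'] at this
  linarith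

lemma det_conjStarAlgAut (U : unitary (Matrix n n ℝ)) (X : Matrix n n ℝ) :
    (Unitary.conjStarAlgAut ℝ _ U X).det = X.det := by
  rw [Unitary.conjStarAlgAut_apply, det_mul, det_mul, mul_right_comm, ← det_mul,
    Unitary.mul_star_self_of_mem U.prop, det_one, one_mul]

lemma PosDef.det_lt_det_half_one_add_sq {M : Matrix n n ℝ} (hM : M.PosDef) (hM1 : M ≠ 1) :
    M.det < ((2⁻¹ : ℝ) • (1 + M)).det ^ 2 := by
  set U := hM.1.eigenvectorUnitary
  set μ := hM.1.eigenvalues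
  have hspec : M = Unitary.conjStarAlgAut ℝ _ U (diagonal μ) := by
    simpa using hM.1.spectral_theorem
  have hmid : (2⁻¹ : ℝ) • (1 + M) =
      Unitary.conjStarAlgAut ℝ _ U (diagonal fun i => (1 + μ i) / 2) := by
    rw [hspec, ← map_one (Unitary.conjStarAlgAut ℝ _ U), ← map_add, ← map_smul, ← diagonal_one,
      diagonal_add, ← diagonal_smul]
    congr; ext i; simp only [Pi.smul_apply, smul_eq_mul]; ring
  obtain ⟨i₀, hi₀⟩ : ∃ i, μ i ≠ 1 := by
    by_contra! h
    exact hM1 (by rw [hspec, show μ = fun _ => 1 from funext h, diagonal_one, map_one])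
  have hμ (i : n) : 0 < μ i := hM.eigenvalues_pos i
  rw [hmid, det_conjStarAlgAut, det_diagonal, ← prod_pow, congrArg det hspec,
    det_conjStarAlgAut, det_diagonal]
  refine prod_lt_prod (fun i _ => hμ i) (fun i _ => ?_) ⟨i₀, mem_univ _, ?_⟩
  · nlinarith [sq_nonneg (1 - μ i)]
  · nlinarith [sq_pos_of_ne_zero (sub_ne_zero.mpr hi₀)]

open scoped MatrixOrder in
lemma PosDef.det_mul_det_lt_det_midpoint_sq {A B : Matrix n n ℝ} (hA : A.PosDef) (hB : B.PosDef)
    (hAB : A ≠ B) : A.det * B.det < ((2⁻¹ : ℝ) • (A + B)).det ^ 2 := by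
  obtain ⟨C, hAC⟩ := CStarAlgebra.nonneg_iff_eq_star_mul_self.mp hA.posSemidef.nonneg
  rw [star_eq_conjTranspose] at hAC
  have hcongr (X : Matrix n n ℝ) : (Cᴴ * X * C).det = A.det * X.det := by
    rw [hAC, det_mul, det_mul, det_mul]; ring
  have hC : IsUnit C := by
    rw [isUnit_iff_isUnit_det]
    refine isUnit_of_mul_isUnit_right (x := Cᴴ.det) ?_
    rw [← det_mul, ← hAC, ← isUnit_iff_isUnit_det]
    exact hA.isUnit
  set M := (C⁻¹)ᴴ * B * C⁻¹
  have hM : M.PosDef := hB.conjTranspose_mul_mul_same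
    (mulVec_injective_iff_isUnit.mpr ((isUnit_nonsing_inv_iff).mpr hC))
  have hBM : B = Cᴴ * M * C := by
    rw [show Cᴴ * M * C = (C⁻¹ * C)ᴴ * B * (C⁻¹ * C) by simp only [M, conjTranspose_mul,
      Matrix.mul_assoc], nonsing_inv_mul _ ((isUnit_iff_isUnit_det C).mp hC), conjTranspose_one,
      Matrix.one_mul, Matrix.mul_one]
  have hmid : (2⁻¹ : ℝ) • (A + B) = Cᴴ * ((2⁻¹ : ℝ) • (1 + M)) * C := by
    rw [hBM, hAC, Matrix.mul_smul, Matrix.smul_mul, Matrix.mul_add, Matrix.add_mul, Matrix.mul_one]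
  have hM1 : M ≠ 1 := fun h => hAB (by rw [hBM, h, Matrix.mul_one, hAC])
  calc A.det * B.det = A.det ^ 2 * M.det := by rw [hBM, hcongr]; ring
    _ < A.det ^ 2 * ((2⁻¹ : ℝ) • (1 + M)).det ^ 2 :=
        mul_lt_mul_of_pos_left (hM.det_lt_det_half_one_add_sq hM1) (pow_pos hA.det_pos 2)
    _ = ((2⁻¹ : ℝ) • (A + B)).det ^ 2 := by rw [hmid, hcongr]; ring

end Matrix

theorem exists_isMinOn_of_isCompact_of_sublevel_subset {X α : Type*} [TopologicalSpace X]
    [LinearOrder α] [TopologicalSpace α] [ClosedIicTopology α] {f : X → α} {P S : Set X} {x₀ : X}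
    (hx₀ : x₀ ∈ P) (hS : IsCompact S) (hSP : S ⊆ P) (hf : ContinuousOn f S)
    (hsub : ∀ x ∈ P, f x ≤ f x₀ → x ∈ S) : ∃ x ∈ P, IsMinOn f P x := by
  have hx₀S : x₀ ∈ S := hsub x₀ hx₀ le_rfl
  obtain ⟨x, hxS, hx⟩ := hS.exists_isMinOn ⟨x₀, hx₀S⟩ hf
  refine ⟨x, hSP hxS, fun y hy => ?_⟩
  by_cases hy₀ : f y ≤ f x₀
  · exact hx (hsub y hy hy₀)
  · exact (hx hx₀S).trans (not_le.mp hy₀).le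

section Glasso

variable {n : Type*} [Fintype n] [DecidableEq n] {Γ : Matrix n n ℝ} {lam : ℝ}

lemma offDiagL1_nonneg (M : Matrix n n ℝ) : 0 ≤ offDiagL1 M :=
  sum_nonneg fun _ _ => sum_nonneg fun _ _ => by split <;> positivity

lemma offDiagL1_add_le (A B : Matrix n n ℝ) : offDiagL1 (A + B) ≤ offDiagL1 A + offDiagL1 B := by
  rw [offDiagL1, offDiagL1, offDiagL1, ← sum_add_distrib]
  refine sum_le_sum fun i _ => ?_
  rw [← sum_add_distrib]
  refine sum_le_sum fun j _ => ?_
  split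
  · simp
  · exact abs_add_le _ _

lemma offDiagL1_smul (c : ℝ) (A : Matrix n n ℝ) : offDiagL1 (c • A) = |c| * offDiagL1 A := by
  simp only [offDiagL1, mul_sum, Matrix.smul_apply, smul_eq_mul, abs_mul, mul_ite, mul_zero]

lemma trace_sub_offDiagL1_le_trace_mul (hΓ : Γ.PosSemidef) (hdiag : ∀ i, Γ i i = 1)
    (Θ : Matrix n n ℝ) : Θ.trace - offDiagL1 Θ ≤ (Γ * Θ).trace := by
  have hΓ_le (i j : n) : |Γ i j| ≤ 1 := by simpa [hdiag] using hΓ.abs_apply_le i j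
  rw [trace_mul_comm, trace, offDiagL1, ← sum_sub_distrib]
  refine sum_le_sum fun i _ => ?_
  rw [show Θ.diag i = ∑ j, if i = j then Θ i j else 0 by simp, ← sum_sub_distrib]
  refine sum_le_sum fun j _ => ?_
  split
  · next hij => subst hij; simp [hdiag]
  · have : |Θ i j * Γ j i| ≤ |Θ i j| := by
      rw [abs_mul]; exact mul_le_of_le_one_right (abs_nonneg _) (hΓ_le j i)
    linarith [neg_abs_le (Θ i j * Γ j i)]

lemma min_mul_trace_le_trace_mul_add (hΓ : Γ.PosSemidef) (hdiag : ∀ i, Γ i i = 1) (hlam : 0 ≤ lam)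
    {Θ : Matrix n n ℝ} (hΘ : Θ.PosSemidef) :
    min lam 1 * Θ.trace ≤ (Γ * Θ).trace + lam * offDiagL1 Θ := by
  have h₀ := hΓ.trace_mul_nonneg hΘ
  have h₁ := trace_sub_offDiagL1_le_trace_mul hΓ hdiag Θ
  have h₂ := offDiagL1_nonneg Θ
  have h₃ := hΘ.trace_nonneg
  rcases le_total lam 1 with h | h
  · rw [min_eq_left h]; nlinarith
  · rw [min_eq_right h]; nlinarith

lemma mul_trace_add_le_glassoObj (hΓ : Γ.PosSemidef) (hdiag : ∀ i, Γ i i = 1) (hlam : 0 < lam)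
    {Θ : Matrix n n ℝ} (hΘ : Θ.PosDef) :
    min lam 1 / 2 * Θ.trace + Fintype.card n * (1 + Real.log (min lam 1 / 2)) ≤
      glassoObj Γ lam Θ := by
  have hc : 0 < min lam 1 / 2 := by positivity
  linarith [min_mul_trace_le_trace_mul_add hΓ hdiag hlam.le hΘ.posSemidef, hΘ.log_det_le hc,
    show glassoObj Γ lam Θ = (Γ * Θ).trace + lam * offDiagL1 Θ - Real.log Θ.det by
      rw [glassoObj]; ring]

lemma neg_glassoObj_le_log_det (hΓ : Γ.PosSemidef) (hlam : 0 ≤ lam) {Θ : Matrix n n ℝ}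
    (hΘ : Θ.PosSemidef) : -glassoObj Γ lam Θ ≤ Real.log Θ.det := by
  rw [glassoObj]
  linarith [hΓ.trace_mul_nonneg hΘ, mul_nonneg hlam (offDiagL1_nonneg Θ)]

lemma continuousOn_glassoObj (Γ : Matrix n n ℝ) (lam : ℝ) :
    ContinuousOn (glassoObj Γ lam) {Θ | Θ.det ≠ 0} := by
  have hoff : Continuous (offDiagL1 : Matrix n n ℝ → ℝ) :=
    continuous_finsetSum _ fun i _ => continuous_finsetSum _ fun j _ => by
      split
      · exact continuous_const
      · exact (continuous_id.matrix_elem i j).abs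
  exact ((continuous_const.matrix_mul continuous_id).matrix_trace.continuousOn.sub
    (continuous_id.matrix_det.continuousOn.log fun _ h => h)).add
    (continuous_const.mul hoff).continuousOn

lemma exists_isMinOn_glassoObj (hΓ : Γ.PosSemidef) (hdiag : ∀ i, Γ i i = 1) (hlam : 0 < lam) :
    ∃ Θ ∈ {Θ : Matrix n n ℝ | Θ.PosDef}, IsMinOn (glassoObj Γ lam) {Θ | Θ.PosDef} Θ := by
  set c := min lam 1
  have hc : 0 < c := lt_min hlam one_pos
  set K := glassoObj Γ lam 1
  have hdet_pos {Θ : Matrix n n ℝ} (h : Real.exp (-K) ≤ Θ.det) : Θ.det ≠ 0 :=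
    ((Real.exp_pos _).trans_le h).ne'
  refine exists_isMinOn_of_isCompact_of_sublevel_subset PosDef.one
    (isCompact_setOf_posSemidef_trace_le_det_ge
      (2 / c * (K - Fintype.card n * (1 + Real.log (c / 2)))) (Real.exp (-K)))
    (fun Θ ⟨hΘ, _, hdet⟩ => hΘ.posDef_iff_det_ne_zero.mpr (hdet_pos hdet))
    ((continuousOn_glassoObj Γ lam).mono fun Θ ⟨_, _, hdet⟩ => hdet_pos hdet)
    fun Θ hΘ hK => ⟨hΘ.posSemidef, ?_, ?_⟩
  · calc Θ.trace = 2 / c * (c / 2 * Θ.trace) := by field_simp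
      _ ≤ _ := by gcongr; linarith [mul_trace_add_le_glassoObj hΓ hdiag hlam hΘ]
  · calc Real.exp (-K) ≤ Real.exp (Real.log Θ.det) :=
          Real.exp_le_exp.mpr (by linarith [neg_glassoObj_le_log_det hΓ hlam.le hΘ.posSemidef])
      _ = Θ.det := Real.exp_log hΘ.det_pos

lemma glassoObj_midpoint_lt (Γ : Matrix n n ℝ) (hlam : 0 ≤ lam) {A B : Matrix n n ℝ}
    (hA : A.PosDef) (hB : B.PosDef) (hAB : A ≠ B) :
    glassoObj Γ lam ((2⁻¹ : ℝ) • (A + B)) < 2⁻¹ * (glassoObj Γ lam A + glassoObj Γ lam B) := by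
  have htrace : (Γ * ((2⁻¹ : ℝ) • (A + B))).trace = 2⁻¹ * ((Γ * A).trace + (Γ * B).trace) := by
    rw [Matrix.mul_smul, trace_smul, Matrix.mul_add, trace_add, smul_eq_mul]
  have hoff : offDiagL1 ((2⁻¹ : ℝ) • (A + B)) ≤ 2⁻¹ * (offDiagL1 A + offDiagL1 B) := by
    rw [offDiagL1_smul, abs_of_pos (by norm_num)]
    gcongr
    exact offDiagL1_add_le A B
  have hlog : Real.log A.det + Real.log B.det < 2 * Real.log ((2⁻¹ : ℝ) • (A + B)).det := by
    have := Real.log_lt_log (mul_pos hA.det_pos hB.det_pos)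
      (hA.det_mul_det_lt_det_midpoint_sq hB hAB)
    rwa [Real.log_mul hA.det_pos.ne' hB.det_pos.ne', Real.log_pow, Nat.cast_ofNat] at this
  simp only [glassoObj, htrace]
  linarith [mul_le_mul_of_nonneg_left hoff hlam]

lemma eq_of_isMinOn_glassoObj (hlam : 0 ≤ lam) {A B : Matrix n n ℝ} (hA : A.PosDef)
    (hB : B.PosDef)
    (hminA : IsMinOn (glassoObj Γ lam) {Θ | Θ.PosDef} A)
    (hminB : IsMinOn (glassoObj Γ lam) {Θ | Θ.PosDef} B) : A = B := by
  by_contra hAB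
  have hmid : ((2⁻¹ : ℝ) • (A + B)).PosDef := (hA.add hB).smul (by norm_num)
  linarith [glassoObj_midpoint_lt Γ hlam hA hB hAB, isMinOn_iff.mp hminA _ hmid,
    isMinOn_iff.mp hminA _ hB, isMinOn_iff.mp hminB _ hA]

lemma glassoObjCov_eq_glassoObj_inv (Γ : Matrix n n ℝ) (lam : ℝ) (A : Matrix n n ℝ) :
    glassoObjCov Γ lam A = glassoObj Γ lam A⁻¹ := by
  rw [glassoObjCov, glassoObj, det_nonsing_inv, Ring.inverse_eq_inv, Real.log_inv]
  ring

end Glasso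

/-- Existence and uniqueness of the graphical Lasso (Gemini) estimator when the
input `Γ̂` is symmetric positive semidefinite with unit diagonal and `λ > 0`;
its inverse is the unique positive definite minimizer of the covariance-form
objective. -/
theorem glasso_existsUnique {m : ℕ} (Γ : Matrix (Fin m) (Fin m) ℝ)
    (hΓ : Γ.PosSemidef) (hdiag : ∀ i, Γ i i = 1) (lam : ℝ) (hlam : 0 < lam) :
    ∃ Θhat : Matrix (Fin m) (Fin m) ℝ, Θhat.PosDef ∧
      (∀ Θ : Matrix (Fin m) (Fin m) ℝ, Θ.PosDef →
        glassoObj Γ lam Θhat ≤ glassoObj Γ lam Θ) ∧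
      (∀ Θ' : Matrix (Fin m) (Fin m) ℝ, Θ'.PosDef →
        (∀ Θ : Matrix (Fin m) (Fin m) ℝ, Θ.PosDef →
          glassoObj Γ lam Θ' ≤ glassoObj Γ lam Θ) → Θ' = Θhat) ∧
      (∀ Arho : Matrix (Fin m) (Fin m) ℝ, Arho.PosDef →
        glassoObjCov Γ lam Θhat⁻¹ ≤ glassoObjCov Γ lam Arho) ∧
      (∀ A' : Matrix (Fin m) (Fin m) ℝ, A'.PosDef →
        (∀ Arho : Matrix (Fin m) (Fin m) ℝ, Arho.PosDef →
          glassoObjCov Γ lam A' ≤ glassoObjCov Γ lam Arho) → A' = Θhat⁻¹) := by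
  obtain ⟨Θhat, hPD, hmin⟩ := exists_isMinOn_glassoObj hΓ hdiag hlam
  have hunique {Θ : Matrix (Fin m) (Fin m) ℝ} (hΘ : Θ.PosDef)
      (hminΘ : ∀ Θ' : Matrix (Fin m) (Fin m) ℝ, Θ'.PosDef →
        glassoObj Γ lam Θ ≤ glassoObj Γ lam Θ') : Θ = Θhat :=
    eq_of_isMinOn_glassoObj hlam.le hΘ hPD (isMinOn_iff.mpr hminΘ) hmin
  have inv_inv {A : Matrix (Fin m) (Fin m) ℝ} (hA : A.PosDef) : A⁻¹⁻¹ = A :=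
    nonsing_inv_nonsing_inv A ((isUnit_iff_isUnit_det A).mp hA.isUnit)
  simp only [glassoObjCov_eq_glassoObj_inv]
  refine ⟨Θhat, hPD, isMinOn_iff.mp hmin, fun _ hΘ => hunique hΘ, ?_, ?_⟩
  · intro A hA
    rw [inv_inv hPD]
    exact isMinOn_iff.mp hmin _ hA.inv
  · intro A hA hminA
    have hminA' (Θ : Matrix (Fin m) (Fin m) ℝ) (hΘ : Θ.PosDef) :
        glassoObj Γ lam A⁻¹ ≤ glassoObj Γ lam Θ := by
      simpa only [inv_inv hΘ] using hminA Θ⁻¹ hΘ.inv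
    rw [← hunique hA.inv hminA', inv_inv hA]
end
end
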